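/- arXiv:2505.21938 — 2 statements merged into one kernel-verified Lean document; each statement's English description precedes it below -/
import Mathlib

section
/- Suppose real numbers satisfy μ̂_i ≤ μ̂_K - 2β_K - 3σδ₀ with σ > 0, δ₀ > 0, and suppose that at all later rounds the target arm's empirical mean μ̂_K' satisfies μ̂_K' ≥ μ̂_K - 2β_K. Then for any round t with 1 ≤ t < exp(n δ₀²), where n is the (unchanged) pull count of arm i, the UCB index of arm i, μ̂_i + 3σ√(log t / n), is at most μ̂_K' and hence at most the UCB index μ̂_K' + 3σ√(log t / N_K) of arm K for any N_K ≥ 1. -/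
open Real

theorem exponential_suppression_ucb (μhati μhatK μhatK' βK σ δ₀ : ℝ)
    (hσ : 0 < σ) (hδ₀ : 0 < δ₀) (hβ : 0 ≤ βK)
    (n : ℕ) (hn : 1 ≤ n)
    (hsup : μhati ≤ μhatK - 2 * βK - 3 * σ * δ₀)
    (hK' : μhatK' ≥ μhatK - 2 * βK) :
    ∀ t : ℕ, 1 ≤ t → (t : ℝ) < Real.exp (n * δ₀ ^ 2) →
      μhati + 3 * σ * Real.sqrt (Real.log t / n) ≤ μhatK' ∧
      ∀ NK : ℕ, 1 ≤ NK →
        μhati + 3 * σ * Real.sqrt (Real.log t / n) ≤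
          μhatK' + 3 * σ * Real.sqrt (Real.log t / NK) := by
  intro t ht htexp
  have hnpos : (0 : ℝ) < n := by exact_mod_cast Nat.lt_of_lt_of_le Nat.zero_lt_one hn
  have hlog : Real.log t < n * δ₀ ^ 2 := by
    have := Real.log_lt_log (by exact_mod_cast ht : (0:ℝ) < t) htexp
    simpa [Real.log_exp] using this
  have hdiv : Real.log t / n < δ₀ ^ 2 := by
    rw [div_lt_iff₀ hnpos]; linarith [hlog]
  have hsqrt : Real.sqrt (Real.log t / n) ≤ δ₀ := by
    calc Real.sqrt (Real.log t / n) ≤ Real.sqrt (δ₀ ^ 2) :=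
          Real.sqrt_le_sqrt hdiv.le
      _ = δ₀ := by rw [Real.sqrt_sq hδ₀.le]
  have h1 : μhati + 3 * σ * Real.sqrt (Real.log t / n) ≤ μhatK' := by
    have : 3 * σ * Real.sqrt (Real.log t / n) ≤ 3 * σ * δ₀ := by
      have h3σ : (0:ℝ) ≤ 3 * σ := by linarith
      exact mul_le_mul_of_nonneg_left hsqrt h3σ
    linarith
  refine ⟨h1, fun NK _ => ?_⟩
  have hs : 0 ≤ Real.sqrt (Real.log t / NK) := Real.sqrt_nonneg _
  nlinarith
end

section
/- Fix reals μ̂_K, β̄, m̄, σ with σ > 0 and μ̂_K - 2β̄ - m̄ > 3σ (i.e., h(1) > 1 where h(c) = ((μ̂_K - 2β̄ - m̃(c))/(3σ))² and m̃ is non-increasing in c). Suppose h: ℝ≥1 → ℝ is differentiable, positive, non-decreasing with h(1) > 1, and g(c) = N + f·c with N ≥ 0, f ≥ 1. Then the function R(c) = (exp(h(c)·g(c)) - t)/c - f (for fixed t ≥ 0) is strictly increasing on c ≥ 1. -/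
open Real

theorem pbi_delay_strict_mono (μhatK βbar mbar σ N f t : ℝ)
    (hσ : 0 < σ) (hgap : μhatK - 2 * βbar - mbar > 3 * σ)
    (h : ℝ → ℝ)
    (hdiff : ∀ c ∈ Set.Ici (1:ℝ), DifferentiableAt ℝ h c)
    (hpos : ∀ c ∈ Set.Ici (1:ℝ), 0 < h c)
    (hmono : MonotoneOn h (Set.Ici (1:ℝ)))
    (h1 : h 1 > 1)
    (hN : 0 ≤ N) (hf : 1 ≤ f) (ht : 0 ≤ t) :
    StrictMonoOn (fun c : ℝ => (Real.exp (h c * (N + f * c)) - t) / c - f)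
      (Set.Ici (1:ℝ)) := by
  intro a ha b hb hab
  simp only [Set.mem_Ici] at ha hb
  have ha0 : (0:ℝ) < a := lt_of_lt_of_le one_pos ha
  have hb0 : (0:ℝ) < b := lt_of_lt_of_le one_pos hb
  have hhab : h a ≤ h b := hmono (Set.mem_Ici.mpr ha) (Set.mem_Ici.mpr hb) hab.le
  have hha : 1 < h a := lt_of_lt_of_le h1 (hmono (Set.mem_Ici.mpr le_rfl) (Set.mem_Ici.mpr ha) ha)
  have hNfa : 0 < N + f * a := by nlinarith
  have hNfb : 0 < N + f * b := by nlinarith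
  have hlog : Real.log b - Real.log a ≤ b - a := by
    have h3 := Real.log_le_sub_one_of_pos (show (0:ℝ) < b / a from div_pos hb0 ha0)
    rw [Real.log_div hb0.ne' ha0.ne'] at h3
    have h4 : b / a - 1 ≤ b - a := by
      rw [div_sub_one ha0.ne']
      calc (b - a) / a ≤ (b - a) / 1 := by
            apply div_le_div_of_nonneg_left (by linarith) one_pos ha
        _ = b - a := div_one _
    linarith
  have hstep : b - a < h b * (N + f * b) - h a * (N + f * a) := by
    nlinarith [mul_nonneg (sub_nonneg.mpr hhab) hNfb.le,
      mul_pos (show (0:ℝ) < h a * f - 1 by nlinarith) (sub_pos.mpr hab)]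
  have hexp : Real.exp (h a * (N + f * a)) * b < Real.exp (h b * (N + f * b)) * a := by
    have e := Real.exp_lt_exp.mpr (show h a * (N + f * a) + Real.log b <
        h b * (N + f * b) + Real.log a by linarith)
    rw [Real.exp_add, Real.exp_add, Real.exp_log ha0, Real.exp_log hb0] at e
    exact e
  have h2 : Real.exp (h a * (N + f * a)) / a < Real.exp (h b * (N + f * b)) / b :=
    (div_lt_div_iff₀ ha0 hb0).mpr hexp
  have h3 : t / b ≤ t / a := by
    rw [div_le_div_iff₀ hb0 ha0]; nlinarith
  simp only [sub_div]
  linarith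
end
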